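/- Let A, B ∈ PSL(2,ℝ) be parabolic elements (|tr(A)| = |tr(B)| = 2, A ≠ E, B ≠ E) that generate a subgroup which is discrete and freely generated by A and B (a free Fuchsian group of rank 2), and assume that the product A·B is also parabolic (|tr(A·B)| = 2). Let m, n ≥ 1 be integers and let R, S ∈ PSL(2,ℝ) satisfy Rᵐ = A and Sⁿ = B. Then the subgroup ⟨R,S⟩ of PSL(2,ℝ) is discrete and freely generated by R and S if and only if m = 1 and n = 1. -/

import Mathlib

abbrev SL2R := Matrix.SpecialLinearGroup (Fin 2) ℝ

noncomputable instance : TopologicalSpace SL2R :=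
  inferInstanceAs (TopologicalSpace {A : Matrix (Fin 2) (Fin 2) ℝ // A.det = 1})

/-- `PSL(2,ℝ)`, the quotient of `SL(2,ℝ)` by its center `{I, -I}`,
endowed with the quotient topology. -/
abbrev PSL2R := SL2R ⧸ Subgroup.center SL2R

/-- The canonical projection `SL(2,ℝ) → PSL(2,ℝ)`. -/
def projPSL : SL2R →* PSL2R := QuotientGroup.mk' (Subgroup.center SL2R)

/-- The trace of an element of `SL(2, ℝ)`, viewed as a matrix. -/
noncomputable def trSL (A : SL2R) : ℝ :=
  Matrix.trace (A : Matrix (Fin 2) (Fin 2) ℝ)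

/-- `(a, b)` is a *free Fuchsian pair* if the subgroup of `PSL(2,ℝ)` generated by
`a` and `b` is discrete (as a topological subgroup) and is freely generated by `a`
and `b` as a free group of rank 2, i.e. the homomorphism from the free group on two
generators sending the generators to `a` and `b` is injective (its range is exactly
the subgroup generated by `a` and `b`). -/
def IsFreeFuchsianPair (a b : PSL2R) : Prop :=
  DiscreteTopology (Subgroup.closure ({a, b} : Set PSL2R)) ∧
    Function.Injective ⇑(FreeGroup.lift (fun i : Bool => if i then a else b))

local notation "M2" => Matrix (Fin 2) (Fin 2) ℝ


lemma mem_center_SL2 {X : SL2R} : X ∈ Subgroup.center SL2R ↔ (X : M2) = 1 ∨ (X : M2) = -1 := by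
  rw [Matrix.SpecialLinearGroup.mem_center_iff]
  constructor
  · rintro ⟨r, hr, hscal⟩
    simp only [Fintype.card_fin] at hr
    rcases mul_eq_zero.mp (show (r - 1) * (r + 1) = 0 by nlinarith) with h1 | h1
    · left; rw [← hscal, show r = 1 by linarith]; simp
    · right; rw [← hscal, show r = -1 by linarith]; simp [map_neg]
  · rintro (h | h)
    · exact ⟨1, by norm_num, by simp [h]⟩
    · exact ⟨-1, by norm_num, by simp [map_neg, h]⟩

lemma projPSL_eq_iff {X Y : SL2R} : projPSL X = projPSL Y ↔ (X : M2) = (Y : M2) ∨ (X : M2) = -(Y : M2) := by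
  rw [show projPSL = QuotientGroup.mk' (Subgroup.center SL2R) from rfl, QuotientGroup.mk'_eq_mk']
  constructor
  · rintro ⟨z, hz, rfl⟩
    rcases mem_center_SL2.mp hz with h | h
    · left; simp [h]
    · right; simp [h]
  · rintro (h | h)
    · exact ⟨1, Subgroup.one_mem _, by rw [mul_one]; exact Subtype.coe_injective h⟩
    · refine ⟨X⁻¹ * Y, ?_, by group⟩
      refine mem_center_SL2.mpr (Or.inr ?_)
      have hX : ((X⁻¹ : SL2R) : M2) * (X : M2) = 1 := by
        rw [← Matrix.SpecialLinearGroup.coe_mul]; simp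
      have h' : (Y : M2) = -(X : M2) := by rw [h, neg_neg]
      calc ((X⁻¹ * Y : SL2R) : M2) = ((X⁻¹ : SL2R) : M2) * (Y : M2) := by
            rw [Matrix.SpecialLinearGroup.coe_mul]
        _ = -1 := by rw [h', mul_neg, hX]


lemma ext2 {X Y : M2} (h00 : X 0 0 = Y 0 0) (h01 : X 0 1 = Y 0 1)
    (h10 : X 1 0 = Y 1 0) (h11 : X 1 1 = Y 1 1) : X = Y := by
  ext i j; fin_cases i <;> fin_cases j <;> assumption

lemma ch2 (X : M2) : X * X = (Matrix.trace X) • X - (X.det) • (1 : M2) := by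
  ext i j
  fin_cases i <;> fin_cases j <;>
    simp [Matrix.mul_apply, Fin.sum_univ_two, Matrix.trace_fin_two, Matrix.det_fin_two,
      Matrix.one_apply] <;> ring

lemma nilsq {K : M2} (htr : Matrix.trace K = 0) (hdet : K.det = 0) : K * K = 0 := by
  rw [ch2, htr, hdet]; simp

lemma powlin {X : M2} (k : ℕ) : ∃ b c : ℝ, X ^ k = b • X + c • (1 : M2) := by
  induction k with
  | zero => exact ⟨0, 1, by simp⟩
  | succ k ih =>
    obtain ⟨b, c, h⟩ := ih
    refine ⟨b * Matrix.trace X + c, -(b * X.det), ?_⟩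
    rw [pow_succ, h, add_mul, smul_mul_assoc, smul_mul_assoc, ch2, one_mul]
    module

lemma parpow {K : M2} (hK : K * K = 0) (β : ℝ) (k : ℕ) :
    (1 + β • K) ^ k = 1 + ((k : ℝ) * β) • K := by
  induction k with
  | zero => simp
  | succ k ih =>
    have h2 : (((k:ℝ)*β) • K) * (β • K) = 0 := by rw [smul_mul_smul_comm, hK, smul_zero]
    rw [pow_succ, ih, show (1 + ((k:ℝ)*β)•K) * (1+β•K)
      = 1 + β•K + ((k:ℝ)*β)•K + (((k:ℝ)*β) • K) * (β • K) by simp only [mul_add, add_mul, one_mul, mul_one]; module, h2, add_zero]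
    push_cast
    module

lemma entry_smul_one_add_smul (α β : ℝ) (K : M2) (i j : Fin 2) :
    (α • (1:M2) + β • K) i j = α * (if i = j then 1 else 0) + β * K i j := by
  simp [Matrix.one_apply]

lemma commutant {K X : M2} (htr : Matrix.trace K = 0) (hdet : K.det = 0) (hK : K ≠ 0)
    (hcomm : X * K = K * X) (hX : X.det = 1) :
    ∃ β : ℝ, X = 1 + β • K ∨ X = -(1 + β • K) := by
  have hd : K 1 1 = -(K 0 0) := by
    rw [Matrix.trace_fin_two] at htr; linarith
  have hbc : K 0 1 * K 1 0 = -(K 0 0 * K 0 0) := by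
    rw [Matrix.det_fin_two, hd] at hdet; nlinarith
  have e1 : X 0 1 * K 1 0 = K 0 1 * X 1 0 := by
    have := congrFun (congrFun hcomm 0) 0
    simp [Matrix.mul_apply, Fin.sum_univ_two] at this; linarith
  have e2 : K 0 1 * (X 0 0 - X 1 1) = 2 * K 0 0 * X 0 1 := by
    have := congrFun (congrFun hcomm 0) 1
    simp [Matrix.mul_apply, Fin.sum_univ_two, hd] at this; linarith
  have e3 : 2 * K 0 0 * X 1 0 = K 1 0 * (X 0 0 - X 1 1) := by
    have := congrFun (congrFun hcomm 1) 0
    simp [Matrix.mul_apply, Fin.sum_univ_two, hd] at this; linarith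
  have key : ∃ α β : ℝ, X = α • (1 : M2) + β • K := by
    rcases eq_or_ne (K 0 0) 0 with haz | haz
    · rcases eq_or_ne (K 0 1) 0 with hbz | hbz
      · have hcz : K 1 0 ≠ 0 := by
          intro hcz
          exact hK (ext2 (by simp [haz]) (by simp [hbz]) (by simp [hcz]) (by simp [hd, haz]))
        have hq : X 0 1 = 0 := by
          rcases mul_eq_zero.mp (show X 0 1 * K 1 0 = 0 by rw [e1, hbz, zero_mul]) with h | h
          · exact h
          · exact absurd h hcz
        have hps : X 0 0 = X 1 1 := by
          rw [haz] at e3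
          rcases mul_eq_zero.mp (show K 1 0 * (X 0 0 - X 1 1) = 0 by linarith) with h | h
          · exact absurd h hcz
          · linarith
        refine ⟨X 0 0, X 1 0 / K 1 0, ext2 ?_ ?_ ?_ ?_⟩ <;>
          rw [entry_smul_one_add_smul]
        · simp [haz]
        · simp [hbz, hq]
        · rw [if_neg (by decide), mul_zero, zero_add, div_mul_cancel₀ _ hcz]
        · simp [hd, haz, ← hps]
      · have hcz : K 1 0 = 0 := by
          rcases mul_eq_zero.mp (show K 0 1 * K 1 0 = 0 by rw [hbc, haz]; ring) with h | h
          · exact absurd h hbz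
          · exact h
        have hr : X 1 0 = 0 := by
          rcases mul_eq_zero.mp (show K 0 1 * X 1 0 = 0 by rw [← e1, hcz, mul_zero]) with h | h
          · exact absurd h hbz
          · exact h
        have hps : X 0 0 = X 1 1 := by
          rw [haz] at e2
          rcases mul_eq_zero.mp (show K 0 1 * (X 0 0 - X 1 1) = 0 by linarith) with h | h
          · exact absurd h hbz
          · linarith
        refine ⟨X 0 0, X 0 1 / K 0 1, ext2 ?_ ?_ ?_ ?_⟩ <;>
          rw [entry_smul_one_add_smul]
        · simp [haz]
        · rw [if_neg (by decide), mul_zero, zero_add, div_mul_cancel₀ _ hbz]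
        · simp [hcz, hr]
        · simp [hd, haz, ← hps]
    · have h2K : (2 : ℝ) * K 0 0 ≠ 0 := mul_ne_zero two_ne_zero haz
      refine ⟨(X 0 0 + X 1 1) / 2, (X 0 0 - X 1 1) / (2 * K 0 0), ext2 ?_ ?_ ?_ ?_⟩ <;>
        rw [entry_smul_one_add_smul]
      · rw [if_pos rfl, mul_one]; field_simp; ring
      · rw [if_neg (by decide), mul_zero, zero_add, div_mul_eq_mul_div, eq_div_iff h2K]
        linarith [e2]
      · rw [if_neg (by decide), mul_zero, zero_add, div_mul_eq_mul_div, eq_div_iff h2K]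
        linarith [e3]
      · rw [if_pos rfl, mul_one, hd]; field_simp; ring
  obtain ⟨α, β, hXab⟩ := key
  have hdet2 : α ^ 2 = 1 := by
    rw [hXab, Matrix.det_fin_two] at hX
    simp only [entry_smul_one_add_smul] at hX
    simp [hd] at hX
    linear_combination hX + β ^ 2 * hbc
  rcases mul_eq_zero.mp (show (α - 1) * (α + 1) = 0 by nlinarith) with h | h
  · refine ⟨β, Or.inl ?_⟩
    rw [hXab, show α = 1 by linarith]; module
  · refine ⟨-β, Or.inr ?_⟩
    rw [hXab, show α = -1 by linarith]; module

lemma trace_mul_entries (K L : M2) : Matrix.trace (K * L)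
    = K 0 0 * L 0 0 + K 0 1 * L 1 0 + (K 1 0 * L 0 1 + K 1 1 * L 1 1) := by
  simp [Matrix.trace_fin_two, Matrix.mul_apply, Fin.sum_univ_two]

lemma nilpair {K L : M2} (htrK : Matrix.trace K = 0) (hdK : K.det = 0)
    (htrL : Matrix.trace L = 0) (hdL : L.det = 0)
    (h : Matrix.trace (K * L) = 0) : K * L = 0 := by
  have hdK' : K 1 1 = -(K 0 0) := by rw [Matrix.trace_fin_two] at htrK; linarith
  have hdL' : L 1 1 = -(L 0 0) := by rw [Matrix.trace_fin_two] at htrL; linarith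
  set a := K 0 0; set b := K 0 1; set c := K 1 0
  set d := L 0 0; set e := L 0 1; set f := L 1 0
  have hbc : b * c = -(a * a) := by
    rw [Matrix.det_fin_two, hdK'] at hdK; nlinarith
  have hef : e * f = -(d * d) := by
    rw [Matrix.det_fin_two, hdL'] at hdL; nlinarith
  have htr2 : 2 * a * d + b * f + c * e = 0 := by
    rw [trace_mul_entries, hdK', hdL'] at h; linarith
  have h1 : b * f = c * e := by
    have : (b * f - c * e) ^ 2 = 0 := by
      linear_combination (b*f + c*e - 2*a*d) * htr2 + (-4*e*f) * hbc + (4*a^2) * hef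
    have := pow_eq_zero_iff (n := 2) (by norm_num) |>.mp this
    linarith
  have h2 : b * f = -(a * d) := by linarith
  have h3 : a * e = b * d := by
    have : (a * e - b * d) ^ 2 = 0 := by
      linear_combination (-b*e) * htr2 + e^2 * hbc + b^2 * hef
    have := pow_eq_zero_iff (n := 2) (by norm_num) |>.mp this
    linarith
  have h4 : c * d = a * f := by
    have : (c * d - a * f) ^ 2 = 0 := by
      linear_combination (-c*f) * htr2 + f^2 * hbc + c^2 * hef
    have := pow_eq_zero_iff (n := 2) (by norm_num) |>.mp this
    linarith
  refine ext2 ?_ ?_ ?_ ?_ <;>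
    simp [Matrix.mul_apply, Fin.sum_univ_two, hdK', hdL'] <;> nlinarith [h1, h2, h3, h4]

noncomputable def rot (x : ℝ) : M2 := !![Real.cos x, -Real.sin x; Real.sin x, Real.cos x]

lemma rot_zero : rot 0 = 1 := by
  ext i j; fin_cases i <;> fin_cases j <;> simp [rot, Matrix.one_apply]

lemma rot_mul (x y : ℝ) : rot x * rot y = rot (x + y) := by
  ext i j
  fin_cases i <;> fin_cases j <;>
    simp [rot, Matrix.mul_apply, Fin.sum_univ_two, Real.cos_add, Real.sin_add] <;> ring

lemma rot_pow (x : ℝ) (k : ℕ) : rot x ^ k = rot (k * x) := by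
  induction k with
  | zero => simp [rot_zero]
  | succ k ih => rw [pow_succ, ih, rot_mul]; push_cast; ring_nf

lemma conj_rot {X : M2} (hdet : X.det = 1) (htr : (Matrix.trace X) ^ 2 < 4) :
    ∃ P Pinv : M2, P * Pinv = 1 ∧ Pinv * P = 1 ∧ ∃ θ : ℝ, X = P * rot θ * Pinv := by
  rw [Matrix.trace_fin_two] at htr
  rw [Matrix.det_fin_two] at hdet
  set a := X 0 0 with ha'; set b := X 0 1 with hb'; set c := X 1 0 with hc'
  set d := X 1 1 with hd'
  have hc : c ≠ 0 := by
    intro hc0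
    rw [hc0] at hdet
    nlinarith [sq_nonneg (a - d)]
  set cθ : ℝ := (a + d) / 2 with hcθ
  have hc1 : cθ ^ 2 < 1 := by rw [hcθ]; nlinarith
  have h1c : 0 < 1 - cθ ^ 2 := by linarith
  set sθ : ℝ := Real.sqrt (1 - cθ ^ 2) with hsθ
  have hs2 : sθ ^ 2 = 1 - cθ ^ 2 := Real.sq_sqrt (by linarith)
  have hspos : 0 < sθ := Real.sqrt_pos.mpr h1c
  have hcs : c * sθ ≠ 0 := mul_ne_zero hc hspos.ne'
  set P : M2 := !![1 - a * cθ, a * sθ; -(c * cθ), c * sθ] with hP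
  set Q : M2 := !![c * sθ, -(a * sθ); c * cθ, 1 - a * cθ] with hQ
  have hPQ : P * Q = (c * sθ) • 1 := by
    ext i j
    fin_cases i <;> fin_cases j <;>
      simp [hP, hQ, Matrix.mul_apply, Fin.sum_univ_two, Matrix.one_apply] <;> ring
  have hQP : Q * P = (c * sθ) • 1 := by
    ext i j
    fin_cases i <;> fin_cases j <;>
      simp [hP, hQ, Matrix.mul_apply, Fin.sum_univ_two, Matrix.one_apply] <;> ring
  set Pinv : M2 := (c * sθ)⁻¹ • Q with hPinv
  have h1 : P * Pinv = 1 := by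
    rw [hPinv, Matrix.mul_smul, hPQ, smul_smul, inv_mul_cancel₀ hcs, one_smul]
  have h2 : Pinv * P = 1 := by
    rw [hPinv, Matrix.smul_mul, hQP, smul_smul, inv_mul_cancel₀ hcs, one_smul]
  refine ⟨P, Pinv, h1, h2, Real.arccos cθ, ?_⟩
  have hcos : Real.cos (Real.arccos cθ) = cθ :=
    Real.cos_arccos (by nlinarith) (by nlinarith)
  have hsin : Real.sin (Real.arccos cθ) = sθ := by
    rw [Real.sin_arccos, hsθ]
  have hXP : X * P = P * rot (Real.arccos cθ) := by
    ext i j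
    fin_cases i <;> fin_cases j <;>
      simp [hP, rot, hcos, hsin, Matrix.mul_apply, Fin.sum_univ_two, ← ha', ← hb', ← hc', ← hd']
    · linear_combination cθ * hdet + (-a) * hs2
    · linear_combination (-sθ) * hdet
    · linear_combination (-c) * hs2
    · ring
  calc X = X * (P * Pinv) := by rw [h1, mul_one]
    _ = (X * P) * Pinv := by rw [mul_assoc]
    _ = P * rot (Real.arccos cθ) * Pinv := by rw [hXP]


lemma continuous_projPSL : Continuous (projPSL : SL2R → PSL2R) :=
  continuous_quotient_mk'

lemma conjPowM {P Pinv X Y : M2} (h1 : P * Pinv = 1) (h2 : Pinv * P = 1)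
    (hX : X = P * Y * Pinv) (k : ℕ) :
    X ^ k = P * Y ^ k * Pinv := by
  induction k with
  | zero => rw [pow_zero, pow_zero, mul_one, h1]
  | succ k ih =>
    rw [pow_succ, ih, hX, pow_succ]
    calc P * Y ^ k * Pinv * (P * Y * Pinv) = P * Y ^ k * (Pinv * P) * Y * Pinv := by
          noncomm_ring
      _ = P * (Y ^ k * Y) * Pinv := by rw [h2]; noncomm_ring

lemma not_discrete {H : Subgroup PSL2R} [DiscreteTopology H] (T : SL2R)
    (htr : (Matrix.trace (T : M2)) ^ 2 < 4)
    (hmem : ∀ k : ℕ, (projPSL T) ^ k ∈ H)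
    (hne : ∀ k : ℕ, 1 ≤ k → (projPSL T) ^ k ≠ 1) : False := by
  obtain ⟨P, Pinv, h1, h2, θ, hconj⟩ := conj_rot T.prop htr
  -- the sequence of angles
  set u : ℕ → ℝ × ℝ := fun k => (Real.cos (k * θ), Real.sin (k * θ)) with hu
  have hcpt : IsCompact ((Set.Icc (-1:ℝ) 1) ×ˢ (Set.Icc (-1:ℝ) 1)) :=
    (isCompact_Icc).prod (isCompact_Icc)
  have humem : ∀ k, u k ∈ ((Set.Icc (-1:ℝ) 1) ×ˢ (Set.Icc (-1:ℝ) 1)) := by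
    intro k
    exact ⟨⟨Real.neg_one_le_cos _, Real.cos_le_one _⟩, ⟨Real.neg_one_le_sin _, Real.sin_le_one _⟩⟩
  obtain ⟨p, -, φ, hφ, hφt⟩ := hcpt.tendsto_subseq humem
  have hφt' : Filter.Tendsto (fun j => u (φ (j + 1))) Filter.atTop (nhds p) :=
    hφt.comp (Filter.tendsto_add_atTop_nat 1)
  have hc1 : Filter.Tendsto (fun j => Real.cos (φ j * θ)) Filter.atTop (nhds p.1) :=
    (continuous_fst.tendsto p).comp hφt
  have hs1 : Filter.Tendsto (fun j => Real.sin (φ j * θ)) Filter.atTop (nhds p.2) :=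
    (continuous_snd.tendsto p).comp hφt
  have hc2 : Filter.Tendsto (fun j => Real.cos (φ (j+1) * θ)) Filter.atTop (nhds p.1) :=
    (continuous_fst.tendsto p).comp hφt'
  have hs2 : Filter.Tendsto (fun j => Real.sin (φ (j+1) * θ)) Filter.atTop (nhds p.2) :=
    (continuous_snd.tendsto p).comp hφt'
  have hp1 : p.1 ^ 2 + p.2 ^ 2 = 1 := by
    have ht : Filter.Tendsto (fun j => Real.cos (φ j * θ) ^ 2 + Real.sin (φ j * θ) ^ 2)
        Filter.atTop (nhds (p.1 ^ 2 + p.2 ^ 2)) := by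
      exact ((hc1.pow 2).add (hs1.pow 2))
    have ht2 : Filter.Tendsto (fun j => Real.cos (φ j * θ) ^ 2 + Real.sin (φ j * θ) ^ 2)
        Filter.atTop (nhds 1) := by
      simp only [Real.cos_sq_add_sin_sq]
      exact tendsto_const_nhds
    exact tendsto_nhds_unique ht ht2
  set d : ℕ → ℕ := fun j => φ (j + 1) - φ j with hd
  have hd1 : ∀ j, 1 ≤ d j := by
    intro j
    have h3 := hφ (Nat.lt_succ_self j)
    simp only [Nat.succ_eq_add_one] at h3
    simp only [hd]
    omega
  have hdcast : ∀ j, ((d j : ℝ)) * θ = φ (j+1) * θ - φ j * θ := by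
    intro j
    rw [hd]
    push_cast [Nat.cast_sub (le_of_lt (hφ (Nat.lt_succ_self j)))]
    ring
  have hcos : Filter.Tendsto (fun j => Real.cos (d j * θ)) Filter.atTop (nhds 1) := by
    have : ∀ j, Real.cos (d j * θ)
        = Real.cos (φ (j+1) * θ) * Real.cos (φ j * θ) + Real.sin (φ (j+1) * θ) * Real.sin (φ j * θ) := by
      intro j; rw [hdcast j, Real.cos_sub]
    simp only [this]
    have := (hc2.mul hc1).add (hs2.mul hs1)
    rw [show p.1 * p.1 + p.2 * p.2 = 1 by nlinarith [hp1]] at this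
    exact this
  have hsin : Filter.Tendsto (fun j => Real.sin (d j * θ)) Filter.atTop (nhds 0) := by
    have : ∀ j, Real.sin (d j * θ)
        = Real.sin (φ (j+1) * θ) * Real.cos (φ j * θ) - Real.cos (φ (j+1) * θ) * Real.sin (φ j * θ) := by
      intro j; rw [hdcast j, Real.sin_sub]
    simp only [this]
    have := (hs2.mul hc1).sub (hc2.mul hs1)
    rw [show p.2 * p.1 - p.1 * p.2 = 0 by ring] at this
    exact this
  -- rot (d j * θ) tends to 1
  have hrot : Filter.Tendsto (fun j => rot (d j * θ)) Filter.atTop (nhds (1 : M2)) := by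
    have hrotform : ∀ x : ℝ, rot x = Real.cos x • (1 : M2) + Real.sin x • !![0, -1; 1, 0] := by
      intro x
      ext i j
      fin_cases i <;> fin_cases j <;> simp [rot, Matrix.one_apply]
    simp only [hrotform]
    have := (hcos.smul (tendsto_const_nhds (x := (1 : M2)))).add
      (hsin.smul (tendsto_const_nhds (x := !![(0:ℝ), -1; 1, 0])))
    simpa using this
  have hmat : Filter.Tendsto (fun j => ((T : M2)) ^ (d j)) Filter.atTop (nhds (1 : M2)) := by
    have hform : ∀ j, ((T : M2)) ^ (d j) = P * rot (d j * θ) * Pinv := by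
      intro j
      rw [conjPowM h1 h2 hconj, rot_pow]
    simp only [hform]
    have := ((tendsto_const_nhds (x := P)).mul hrot).mul (tendsto_const_nhds (x := Pinv))
    rw [show P * 1 * Pinv = 1 by rw [mul_one, h1]] at this
    exact this
  have hSL : Filter.Tendsto (fun j => T ^ (d j)) Filter.atTop (nhds (1 : SL2R)) := by
    have e1 : (fun j => ((T ^ d j : SL2R) : M2)) = (fun j => (T : M2) ^ d j) := by
      funext j; exact Matrix.SpecialLinearGroup.coe_pow T (d j)
    exact (tendsto_subtype_rng (p := fun A : M2 => A.det = 1)).mpr (e1 ▸ hmat)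
  have hPSL : Filter.Tendsto (fun j => (projPSL T) ^ (d j)) Filter.atTop (nhds (1 : PSL2R)) := by
    have h0 := (continuous_projPSL.tendsto (1 : SL2R)).comp hSL
    rw [map_one projPSL] at h0
    have e : (fun j => (projPSL T) ^ (d j)) = fun j => projPSL (T ^ d j) := by
      funext j; exact (map_pow projPSL T (d j)).symm
    rw [e]
    exact h0
  set hj : ℕ → H := fun j => ⟨(projPSL T) ^ (d j), hmem (d j)⟩ with hhj
  have hjt : Filter.Tendsto hj Filter.atTop (nhds (1 : H)) := by
    rw [tendsto_subtype_rng]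
    exact hPSL
  rw [nhds_discrete ↥H, Filter.tendsto_pure] at hjt
  obtain ⟨j, hj1⟩ := hjt.exists
  exact hne (d j) (hd1 j) (by simpa [hhj, Subtype.ext_iff] using hj1)


lemma fg_comm_ne_one :
    (FreeGroup.of true * FreeGroup.of false * (FreeGroup.of true)⁻¹ * (FreeGroup.of false)⁻¹ :
      FreeGroup Bool) ≠ 1 := by
  intro h
  have := congrArg (FreeGroup.lift (fun i : Bool =>
    if i then Equiv.swap (0 : Fin 3) 1 else Equiv.swap (1 : Fin 3) 2)) h
  simp only [map_mul, map_inv, FreeGroup.lift_apply_of, map_one, if_true, if_false] at this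
  norm_num at this
  exact absurd this (by decide)

lemma fg_pow_ne_one (d : ℕ) (hd : 1 ≤ d) :
    ((FreeGroup.of true * FreeGroup.of false) ^ d : FreeGroup Bool) ≠ 1 := by
  intro h
  have := congrArg (FreeGroup.lift (fun _ : Bool => (Multiplicative.ofAdd (1 : ℤ)))) h
  simp only [map_pow, map_mul, FreeGroup.lift_apply_of, map_one] at this
  have h2 : ((Multiplicative.ofAdd (1:ℤ)) * (Multiplicative.ofAdd (1:ℤ))) ^ d
      = Multiplicative.ofAdd ((2 * d : ℤ)) := by
    rw [← ofAdd_add]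
    rw [← ofAdd_nsmul]
    congr 1
    push_cast
    ring
  rw [h2] at this
  have : (2 * (d:ℤ)) = 0 := by exact_mod_cast Multiplicative.ofAdd.injective (this.trans rfl)
  omega
lemma signed_eq {K : M2} (hKne : K ≠ 0) (htrK : Matrix.trace K = 0) {x y s t : ℝ}
    (hs : s = 1 ∨ s = -1) (ht : t = 1 ∨ t = -1)
    (h : s • ((1:M2) + x • K) = t • ((1:M2) + y • K)) : x = y := by
  have htr := congrArg Matrix.trace h
  simp only [Matrix.trace_smul, Matrix.trace_add, Matrix.trace_one, Matrix.trace_smul, htrK] at htr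
  have hst : s = t := by
    rcases hs with rfl | rfl <;> rcases ht with rfl | rfl <;> first | rfl | (exfalso; norm_num at htr)
  subst hst
  have hs0 : s ≠ 0 := by rcases hs with rfl | rfl <;> norm_num
  have h2 := smul_right_injective M2 hs0 h
  have h3 : (x - y) • K = 0 := by
    have := add_left_cancel h2
    rw [sub_smul, this, sub_self]
  rcases smul_eq_zero.mp h3 with h4 | h4
  · linarith [sub_eq_zero.mp (by linarith [h4] : x - y = 0)]
  · exact absurd h4 hKne

lemma trace_expand {K L : M2} (hK : Matrix.trace K = 0) (hL : Matrix.trace L = 0) (x y : ℝ) :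
    Matrix.trace (((1:M2) + x • K) * (1 + y • L)) = 2 + x * y * Matrix.trace (K * L) := by
  rw [show ((1:M2) + x • K) * (1 + y • L) = 1 + x • K + y • L + (x * y) • (K * L) by
    simp only [mul_add, add_mul, one_mul, mul_one, smul_mul_assoc, mul_smul_comm, smul_smul]
    module]
  simp only [Matrix.trace_add, Matrix.trace_smul, Matrix.trace_one, hK, hL]
  simp [smul_eq_mul]
  try ring

lemma expand_prod (K L : M2) (x y : ℝ) :
    ((1:M2) + x • K) * (1 + y • L) = 1 + x • K + y • L + (x * y) • (K * L) := by
  simp only [mul_add, add_mul, one_mul, mul_one, smul_mul_assoc, mul_smul_comm, smul_smul]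
  module

lemma det_sub_one {Am : M2} (hdet : Am.det = 1) (htr : Matrix.trace Am = 2) :
    (Am - 1).det = 0 := by
  rw [Matrix.det_fin_two] at hdet ⊢
  rw [Matrix.trace_fin_two] at htr
  simp only [Matrix.sub_apply, Matrix.one_apply]
  norm_num
  try nlinarith

lemma root_structure {K : M2} {R' : SL2R} {m : ℕ}
    (htrK : Matrix.trace K = 0) (hdetK : K.det = 0) (hKne : K ≠ 0)
    (hpow : ∃ δ : ℝ, (δ = 1 ∨ δ = -1) ∧ ((R' : M2)) ^ m = δ • ((1:M2) + K)) :
    ∃ σ β : ℝ, (σ = 1 ∨ σ = -1) ∧ (R' : M2) = σ • ((1:M2) + β • K) ∧ (m : ℝ) * β = 1 := by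
  obtain ⟨δ, hδ, hpm⟩ := hpow
  have hKK : K * K = 0 := nilsq htrK hdetK
  have hδ0 : δ ≠ 0 := by rcases hδ with rfl | rfl <;> norm_num
  -- R' commutes with K
  have hcommA : ((1:M2) + K) * (R' : M2) = (R' : M2) * ((1:M2) + K) := by
    have h5 : (δ • ((1:M2) + K)) * (R' : M2) = (R' : M2) * (δ • ((1:M2) + K)) := by
      rw [← hpm, ← pow_succ, ← pow_succ']
    rw [smul_mul_assoc, mul_smul_comm] at h5
    exact smul_right_injective M2 hδ0 h5
  have hcomm : (R' : M2) * K = K * (R' : M2) := by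
    have := hcommA
    rw [add_mul, mul_add, one_mul, mul_one] at this
    have := add_left_cancel this
    exact this.symm
  obtain ⟨β, hβ⟩ := commutant htrK hdetK hKne hcomm R'.prop
  have hform : ∃ σ : ℝ, (σ = 1 ∨ σ = -1) ∧ (R' : M2) = σ • ((1:M2) + β • K) := by
    rcases hβ with h | h
    · exact ⟨1, Or.inl rfl, by rw [h, one_smul]⟩
    · exact ⟨-1, Or.inr rfl, by rw [h, neg_smul, one_smul]⟩
  obtain ⟨σ, hσ, hRform⟩ := hform
  refine ⟨σ, β, hσ, hRform, ?_⟩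
  have hpow2 : ((R' : M2)) ^ m = (σ ^ m) • ((1:M2) + ((m : ℝ) * β) • K) := by
    rw [hRform, smul_pow, parpow hKK]
  have hσm : σ ^ m = 1 ∨ σ ^ m = -1 := by
    rcases hσ with rfl | rfl
    · left; exact one_pow m
    · rcases Nat.even_or_odd m with he | ho
      · left; exact he.neg_one_pow
      · right; exact ho.neg_one_pow
  have heq : (σ ^ m) • ((1:M2) + ((m : ℝ) * β) • K) = δ • ((1:M2) + (1:ℝ) • K) := by
    rw [← hpow2, hpm, one_smul]
  exact signed_eq hKne htrK hσm hδ heq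

lemma psl_one_iff {X : SL2R} : projPSL X = 1 ↔ ((X : M2) = 1 ∨ (X : M2) = -1) := by
  have := projPSL_eq_iff (X := X) (Y := 1)
  rw [map_one] at this
  simpa using this


/-- Let `A, B ∈ PSL(2,ℝ)` be parabolic elements (`|tr| = 2`, computed on lifts
`A', B' ∈ SL(2,ℝ)`, and not the identity) forming a free Fuchsian pair, such that
`A·B` is also parabolic. If `Rᵐ = A` and `Sⁿ = B` with `m, n ≥ 1`, then `⟨R, S⟩`
is a free Fuchsian group of rank 2 freely generated by `R` and `S` if and only if
`m = 1` and `n = 1`. -/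
theorem roots_of_parabolic_free_fuchsian
    (A B R S : PSL2R) (A' B' : SL2R)
    (hA' : projPSL A' = A) (hB' : projPSL B' = B)
    (hAne : A ≠ 1) (hBne : B ≠ 1)
    (htrA : |trSL A'| = 2) (htrB : |trSL B'| = 2) (htrAB : |trSL (A' * B')| = 2)
    (hfree : IsFreeFuchsianPair A B)
    (m n : ℕ) (hm : 1 ≤ m) (hn : 1 ≤ n)
    (hR : R ^ m = A) (hS : S ^ n = B) :
    IsFreeFuchsianPair R S ↔ m = 1 ∧ n = 1 := by
  constructor
  · intro hRS
    by_contra hmn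
    -- lifts
    obtain ⟨R', hR'⟩ := QuotientGroup.mk'_surjective (Subgroup.center SL2R) R
    obtain ⟨S', hS'⟩ := QuotientGroup.mk'_surjective (Subgroup.center SL2R) S
    have hR'p : projPSL R' = R := hR'
    have hS'p : projPSL S' = S := hS'
    -- normalize A'
    obtain ⟨ε1, hε1, hAtr⟩ : ∃ ε : ℝ, (ε = 1 ∨ ε = -1) ∧ Matrix.trace (ε • (A' : M2)) = 2 := by
      rcases (abs_eq (by norm_num : (0:ℝ) ≤ 2)).mp htrA with h | h
      · exact ⟨1, Or.inl rfl, by simpa [trSL] using h⟩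
      · refine ⟨-1, Or.inr rfl, ?_⟩
        rw [Matrix.trace_smul]
        simp only [trSL] at h
        rw [h]; norm_num
    obtain ⟨ε2, hε2, hBtr⟩ : ∃ ε : ℝ, (ε = 1 ∨ ε = -1) ∧ Matrix.trace (ε • (B' : M2)) = 2 := by
      rcases (abs_eq (by norm_num : (0:ℝ) ≤ 2)).mp htrB with h | h
      · exact ⟨1, Or.inl rfl, by simpa [trSL] using h⟩
      · refine ⟨-1, Or.inr rfl, ?_⟩
        rw [Matrix.trace_smul]
        simp only [trSL] at h
        rw [h]; norm_num
    have hε1sq : ε1 * ε1 = 1 := by rcases hε1 with rfl | rfl <;> norm_num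
    have hε2sq : ε2 * ε2 = 1 := by rcases hε2 with rfl | rfl <;> norm_num
    set Amat : M2 := ε1 • (A' : M2) with hAmat
    set Bmat : M2 := ε2 • (B' : M2) with hBmat
    have hA'coe : (A' : M2) = ε1 • Amat := by rw [hAmat, smul_smul, hε1sq, one_smul]
    have hB'coe : (B' : M2) = ε2 • Bmat := by rw [hBmat, smul_smul, hε2sq, one_smul]
    have hdetAmat : Amat.det = 1 := by
      rw [hAmat, Matrix.det_smul, A'.prop]
      rcases hε1 with rfl | rfl <;> norm_num
    have hdetBmat : Bmat.det = 1 := by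
      rw [hBmat, Matrix.det_smul, B'.prop]
      rcases hε2 with rfl | rfl <;> norm_num
    set K : M2 := Amat - 1 with hK
    set L : M2 := Bmat - 1 with hL
    have hAmatK : Amat = 1 + K := by rw [hK]; abel
    have hBmatL : Bmat = 1 + L := by rw [hL]; abel
    have htrK : Matrix.trace K = 0 := by
      rw [hK, Matrix.trace_sub, hAtr, Matrix.trace_one]; simp
    have htrL : Matrix.trace L = 0 := by
      rw [hL, Matrix.trace_sub, hBtr, Matrix.trace_one]; simp
    have hdetK : K.det = 0 := det_sub_one hdetAmat hAtr
    have hdetL : L.det = 0 := det_sub_one hdetBmat hBtr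
    have hKne : K ≠ 0 := by
      intro h0
      have hAm1 : Amat = 1 := by rw [hAmatK, h0, add_zero]
      have : (A' : M2) = ε1 • (1 : M2) := by rw [hA'coe, hAm1]
      apply hAne
      rw [← hA']
      apply psl_one_iff.mpr
      rcases hε1 with rfl | rfl
      · left; rw [this, one_smul]
      · right; rw [this]; simp
    have hLne : L ≠ 0 := by
      intro h0
      have hBm1 : Bmat = 1 := by rw [hBmatL, h0, add_zero]
      have : (B' : M2) = ε2 • (1 : M2) := by rw [hB'coe, hBm1]
      apply hBne
      rw [← hB']
      apply psl_one_iff.mpr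
      rcases hε2 with rfl | rfl
      · left; rw [this, one_smul]
      · right; rw [this]; simp
    -- power equations
    have hRpow : ∃ δ : ℝ, (δ = 1 ∨ δ = -1) ∧ ((R' : M2)) ^ m = δ • ((1:M2) + K) := by
      have hproj : projPSL (R' ^ m) = projPSL A' := by
        rw [map_pow, hR'p, hR, ← hA']
      rcases projPSL_eq_iff.mp hproj with h | h
      · rw [Matrix.SpecialLinearGroup.coe_pow] at h
        refine ⟨ε1, hε1, ?_⟩
        rw [h, hA'coe, hAmatK]
      · rw [Matrix.SpecialLinearGroup.coe_pow] at h
        refine ⟨-ε1, ?_, ?_⟩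
        · rcases hε1 with rfl | rfl <;> simp
        · rw [h, hA'coe, hAmatK, neg_smul]
    have hSpow : ∃ δ : ℝ, (δ = 1 ∨ δ = -1) ∧ ((S' : M2)) ^ n = δ • ((1:M2) + L) := by
      have hproj : projPSL (S' ^ n) = projPSL B' := by
        rw [map_pow, hS'p, hS, ← hB']
      rcases projPSL_eq_iff.mp hproj with h | h
      · rw [Matrix.SpecialLinearGroup.coe_pow] at h
        refine ⟨ε2, hε2, ?_⟩
        rw [h, hB'coe, hBmatL]
      · rw [Matrix.SpecialLinearGroup.coe_pow] at h
        refine ⟨-ε2, ?_, ?_⟩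
        · rcases hε2 with rfl | rfl <;> simp
        · rw [h, hB'coe, hBmatL, neg_smul]
    obtain ⟨σR, β, hσR, hRform, hmβ⟩ := root_structure htrK hdetK hKne hRpow
    obtain ⟨σS, γ, hσS, hSform, hnγ⟩ := root_structure htrL hdetL hLne hSpow
    -- the trace of A'B'
    set c0 : ℝ := Matrix.trace (K * L) with hc0
    have habs : |2 + c0| = 2 := by
      have h1 : trSL (A' * B') = (ε1 * ε2) * (2 + c0) := by
        simp only [trSL, Matrix.SpecialLinearGroup.coe_mul]
        rw [hA'coe, hB'coe, smul_mul_smul_comm, Matrix.trace_smul, hAmatK, hBmatL]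
        have := trace_expand htrK htrL 1 1
        rw [one_smul, one_smul] at this
        rw [this]
        simp [hc0]
        try ring
      rw [h1] at htrAB
      rwa [abs_mul, show |ε1 * ε2| = 1 by rcases hε1 with rfl | rfl <;> rcases hε2 with rfl | rfl <;> norm_num, one_mul] at htrAB
    have hΦ := hRS.2
    rcases (abs_eq (by norm_num : (0:ℝ) ≤ 2)).mp habs with hcase | hcase
    · -- c0 = 0 : R and S commute, contradiction with freeness
      have hc00 : c0 = 0 := by linarith
      have hKL : K * L = 0 := nilpair htrK hdetK htrL hdetL hc00
      have hLK : L * K = 0 := nilpair htrL hdetL htrK hdetK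
        (by rw [Matrix.trace_mul_comm]; exact hc00)
      have hmatcomm : (R' : M2) * (S' : M2) = (S' : M2) * (R' : M2) := by
        rw [hRform, hSform, smul_mul_smul_comm, smul_mul_smul_comm,
          expand_prod, expand_prod, hKL, hLK, mul_comm σS σR]
        rw [smul_zero, smul_zero, add_zero, add_zero]
        congr 1
        module
      have hSLcomm : R' * S' = S' * R' := by
        exact Subtype.coe_injective hmatcomm
      have hcommRS : R * S = S * R := by
        rw [← hR'p, ← hS'p, ← map_mul, ← map_mul, hSLcomm]
      have h1 : (FreeGroup.lift (fun i : Bool => if i then R else S))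
          (FreeGroup.of true * FreeGroup.of false * (FreeGroup.of true)⁻¹ *
            (FreeGroup.of false)⁻¹) = 1 := by
        simp only [map_mul, map_inv, FreeGroup.lift_apply_of]
        norm_num
        rw [hcommRS]
        group
      have := hΦ (h1.trans (map_one _).symm)
      exact fg_comm_ne_one this
    · -- c0 = -4 : R*S is elliptic, contradiction with discreteness
      have hc04 : c0 = -4 := by linarith
      have hmn2 : 2 ≤ m * n := by
        rcases not_and_or.mp hmn with h | h
        · have h2 : 2 ≤ m := by omega
          calc 2 = 2 * 1 := by omega
            _ ≤ m * n := Nat.mul_le_mul h2 hn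
        · have h2 : 2 ≤ n := by omega
          calc 2 = 1 * 2 := by omega
            _ ≤ m * n := Nat.mul_le_mul hm h2
      have hm0 : (m : ℝ) ≠ 0 := Nat.cast_ne_zero.mpr (by omega)
      have hn0 : (n : ℝ) ≠ 0 := Nat.cast_ne_zero.mpr (by omega)
      set T : SL2R := R' * S' with hT
      have hTproj : projPSL T = R * S := by rw [hT, map_mul, hR'p, hS'p]
      have hx : (2:ℝ) ≤ (m:ℝ) * (n:ℝ) := by exact_mod_cast hmn2
      have hxpos : (0:ℝ) < (m:ℝ) * (n:ℝ) := by linarith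
      have hβγ : β * γ = 1 / ((m:ℝ) * (n:ℝ)) := by
        field_simp
        calc β * γ * (m:ℝ) * (n:ℝ) = ((m:ℝ) * β) * ((n:ℝ) * γ) := by ring
          _ = 1 := by rw [hmβ, hnγ]; norm_num
      have hTtr : (Matrix.trace (T : M2)) ^ 2 < 4 := by
        have hcoe : (T : M2) = (R' : M2) * (S' : M2) := rfl
        rw [hcoe, hRform, hSform, smul_mul_smul_comm, Matrix.trace_smul,
          trace_expand htrK htrL β γ]
        rw [show Matrix.trace (K * L) = c0 from rfl, hc04]
        have hσ2 : (σR * σS) ^ 2 = 1 := by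
          rcases hσR with rfl | rfl <;> rcases hσS with rfl | rfl <;> norm_num
        rw [smul_eq_mul, mul_pow, hσ2, one_mul, hβγ]
        have h4 : (0:ℝ) < 4 * (1 / ((m:ℝ) * (n:ℝ))) := by positivity
        have h5 : 4 * (1 / ((m:ℝ) * (n:ℝ))) ≤ 2 := by
          rw [mul_one_div, div_le_iff₀ hxpos]
          linarith
        nlinarith
      haveI hdisc := hRS.1
      refine not_discrete (H := Subgroup.closure ({R, S} : Set PSL2R)) T hTtr ?_ ?_
      · intro k
        rw [hTproj]
        exact pow_mem (mul_mem (Subgroup.subset_closure (by simp))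
          (Subgroup.subset_closure (by simp))) k
      · intro k hk h1
        apply fg_pow_ne_one k hk
        apply hΦ
        rw [map_one, map_pow, map_mul, FreeGroup.lift_apply_of, FreeGroup.lift_apply_of]
        norm_num
        rw [← hTproj]
        exact hTproj ▸ h1
  · rintro ⟨hm1, hn1⟩
    subst hm1; subst hn1
    rw [pow_one] at hR hS
    subst hR; subst hS
    exact hfree
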